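/- Every greedy ordering b satisfies cost(b) ≤ cost(a) + 1 for every ordering a; in particular, the cost of any greedy ordering exceeds the minimum cost over all orderings by at most 1. -/

import Mathlib

open Finset

/-- `z1 p a j = ∏_{i=1}^{j-1} p_{a(i)}`: the probability that the first `j-1`
coins in ordering `a` all come up heads. -/
noncomputable def z1 (p : ℕ → ℝ) (a : ℕ → ℕ) (j : ℕ) : ℝ :=
  ∏ i ∈ Finset.Ico 1 j, p (a i)

/-- `z0 p a j = ∏_{i=1}^{j-1} (1 - p_{a(i)})`: the probability that the first `j-1`
coins in ordering `a` all come up tails. -/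
noncomputable def z0 (p : ℕ → ℝ) (a : ℕ → ℕ) (j : ℕ) : ℝ :=
  ∏ i ∈ Finset.Ico 1 j, (1 - p (a i))

/-- `cost n p a = 2 + Σ_{j=3}^{n} (z_j^1(a) + z_j^0(a))`. -/
noncomputable def cost (n : ℕ) (p : ℕ → ℝ) (a : ℕ → ℕ) : ℝ :=
  2 + ∑ j ∈ Finset.Icc 3 n, (z1 p a j + z0 p a j)

/-- An ordering is a permutation of the positions `{1, …, n}`. -/
def IsOrdering (n : ℕ) (a : ℕ → ℕ) : Prop :=
  Set.BijOn a (Set.Icc 1 n) (Set.Icc 1 n)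

/-- An ordering is optimal if it has minimal cost among all orderings. -/
def IsOptimal (n : ℕ) (p : ℕ → ℝ) (a : ℕ → ℕ) : Prop :=
  IsOrdering n a ∧ ∀ b : ℕ → ℕ, IsOrdering n b → cost n p a ≤ cost n p b

/-- `a` is 0-biased at position `j`: `z_j^0(a) > z_j^1(a)`. -/
def ZeroBiased (p : ℕ → ℝ) (a : ℕ → ℕ) (j : ℕ) : Prop := z1 p a j < z0 p a j

/-- `a` is 1-biased at position `j`: `z_j^0(a) < z_j^1(a)`. -/
def OneBiased (p : ℕ → ℝ) (a : ℕ → ℕ) (j : ℕ) : Prop := z0 p a j < z1 p a j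

/-- `a` is unbiased at position `j`: `z_j^0(a) = z_j^1(a)`. -/
def Unbiased (p : ℕ → ℝ) (a : ℕ → ℕ) (j : ℕ) : Prop := z0 p a j = z1 p a j

/-- An ordering `b` is greedy if at every 1-biased position it uses a remaining
coin of smallest heads-probability, and at every other position (0-biased or
unbiased) a remaining coin of largest heads-probability. -/
def IsGreedy (n : ℕ) (p : ℕ → ℝ) (b : ℕ → ℕ) : Prop :=
  IsOrdering n b ∧ ∀ k, 1 ≤ k → k ≤ n →
    (OneBiased p b k → ∀ j, k ≤ j → j ≤ n → p (b k) ≤ p (b j)) ∧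
    (¬ OneBiased p b k → ∀ j, k ≤ j → j ≤ n → p (b j) ≤ p (b k))

/-!
Write `x₁, …, xₙ` for the heads-probabilities in the order of flipping. Up to the
order-independent term `∏ xᵢ + ∏ (1 - xᵢ)`, the cost is `1 + H + T`, where `H` and `T` are the
sums of the prefix products of the `xᵢ` and of the `1 - xᵢ`. Each of `H`, `T` is smallest,
`H⋆` resp. `T⋆`, when its factors increase. Comparing the first terms `x₁ + (1 - x₁) = 1` of
`H + T` with the first terms `min xᵢ` and `1 - max xᵢ` of the sorted sums gives
`H + T ≥ H⋆ + T⋆ + (max xᵢ - min xᵢ)` for every ordering. Conversely, an induction along a greedy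
ordering, carrying the probabilities `u`, `v` that all coins so far showed heads, resp. tails,
bounds `u H + v T` by `u H⋆ + v T⋆ + min u v + max u v (max xᵢ - min xᵢ)`, each step reducing to
an inequality between real numbers; at `u = v = 1` the two bounds differ by 1.
-/

/-- `prefixProdSum [x₁, …, xₖ] = x₁ + x₁ x₂ + ⋯ + x₁ x₂ ⋯ xₖ`. -/
noncomputable def prefixProdSum : List ℝ → ℝ
  | [] => 0
  | x :: l => x * (1 + prefixProdSum l)

section PrefixProdSum

variable {l s : List ℝ} {x m : ℝ}

lemma prefixProdSum_nonneg (hl : ∀ y ∈ l, 0 ≤ y) : 0 ≤ prefixProdSum l := by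
  induction l with
  | nil => exact le_rfl
  | cons x l ih =>
    simp only [List.forall_mem_cons] at hl
    exact mul_nonneg hl.1 (by linarith [ih hl.2])

lemma mul_prod_add_mul_prefixProdSum_nonneg (hx0 : 0 ≤ x) (hx1 : x ≤ 1)
    (hs : ∀ y ∈ s, 0 ≤ y) : 0 ≤ x * s.prod + (1 - x) * prefixProdSum s :=
  add_nonneg (mul_nonneg hx0 (List.prod_nonneg hs))
    (mul_nonneg (sub_nonneg.2 hx1) (prefixProdSum_nonneg hs))

lemma prefixProdSum_append_singleton (l : List ℝ) (x : ℝ) :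
    prefixProdSum (l ++ [x]) = prefixProdSum l + l.prod * x := by
  induction l with
  | nil => simp [prefixProdSum]
  | cons y l ih => simp only [List.cons_append, prefixProdSum, ih, List.prod_cons]; ring

lemma prefixProdSum_orderedInsert_le (hs : ∀ y ∈ s, 0 ≤ y) :
    prefixProdSum (s.orderedInsert (· ≤ ·) x) ≤ prefixProdSum (x :: s) := by
  induction s with
  | nil => exact le_rfl
  | cons y s ih =>
    simp only [List.forall_mem_cons] at hs
    by_cases hxy : x ≤ y
    · rw [List.orderedInsert_cons, if_pos hxy]
    · rw [List.orderedInsert_cons, if_neg hxy]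
      have h := mul_le_mul_of_nonneg_left (ih hs.2) hs.1
      simp only [prefixProdSum] at h ⊢
      linarith

lemma prefixProdSum_insertionSort_le (hl : ∀ y ∈ l, 0 ≤ y) :
    prefixProdSum (l.insertionSort (· ≤ ·)) ≤ prefixProdSum l := by
  induction l with
  | nil => exact le_rfl
  | cons x l ih =>
    simp only [List.forall_mem_cons] at hl
    have hsort : ∀ y ∈ l.insertionSort (· ≤ ·), 0 ≤ y := fun y hy =>
      hl.2 y ((List.mem_insertionSort _).1 hy)
    calc prefixProdSum ((l.insertionSort (· ≤ ·)).orderedInsert (· ≤ ·) x)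
        ≤ x * (1 + prefixProdSum (l.insertionSort (· ≤ ·))) :=
          prefixProdSum_orderedInsert_le hsort
      _ ≤ x * (1 + prefixProdSum l) := by gcongr; exacts [hl.1, ih hl.2]

lemma headI_orderedInsert_le (s : List ℝ) (x : ℝ) : (s.orderedInsert (· ≤ ·) x).headI ≤ x := by
  cases s with
  | nil => exact le_rfl
  | cons y s =>
    by_cases hxy : x ≤ y
    · simp [hxy]
    · simpa [hxy] using (not_le.1 hxy).le

lemma prefixProdSum_orderedInsert_le_headI_add (hs : ∀ y ∈ s, 0 ≤ y) :
    prefixProdSum (s.orderedInsert (· ≤ ·) x) ≤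
      (s.orderedInsert (· ≤ ·) x).headI + x * prefixProdSum s := by
  induction s with
  | nil => simp [prefixProdSum]
  | cons y s ih =>
    simp only [List.forall_mem_cons] at hs
    by_cases hxy : x ≤ y
    · rw [List.orderedInsert_cons, if_pos hxy]
      simp only [prefixProdSum, List.headI_cons]
      exact le_of_eq (by ring)
    · rw [List.orderedInsert_cons, if_neg hxy]
      have h := mul_le_mul_of_nonneg_left (ih hs.2) hs.1
      have hhead := mul_le_mul_of_nonneg_left (headI_orderedInsert_le s x) hs.1
      simp only [prefixProdSum, List.headI_cons] at h ⊢
      linarith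

lemma headI_insertionSort_le (hm : m ∈ l) : (l.insertionSort (· ≤ ·)).headI ≤ m := by
  have hmem : m ∈ l.insertionSort (· ≤ ·) := (List.mem_insertionSort _).2 hm
  have hsorted := List.pairwise_insertionSort (· ≤ ·) l
  cases h : l.insertionSort (· ≤ ·) with
  | nil => simp [h] at hmem
  | cons y t =>
    rw [h] at hmem hsorted
    rcases List.mem_cons.1 hmem with rfl | hm
    · exact le_rfl
    · exact List.rel_of_pairwise_cons hsorted hm

lemma insertionSort_cons_of_forall_le (h : ∀ y ∈ l, y ≤ x) :
    (x :: l).insertionSort (· ≤ ·) = l.insertionSort (· ≤ ·) ++ [x] := by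
  refine List.Perm.eq_of_pairwise' (List.pairwise_insertionSort _ _) ?_ ?_
  · simp only [List.pairwise_append, List.pairwise_insertionSort, List.pairwise_singleton,
      List.mem_singleton, forall_eq, true_and]
    exact fun y hy => h y ((List.mem_insertionSort _).1 hy)
  · exact (List.perm_insertionSort _ _).trans
      (((List.perm_insertionSort _ l).symm.cons x).trans (List.perm_append_singleton _ _).symm)

end PrefixProdSum

section Scalar

variable {u v x m d w : ℝ}

lemma one_sub_mul_two_mul_sub_one_le (hm : 0 ≤ m) (hmx : m ≤ x) (hx : x ≤ 1)
    (hw : m * (1 - x) ≤ (1 - m) * w) :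
    (1 - x) * (2 * x - 1) ≤ (1 - x) * w + x ^ 2 * (x - m) := by
  rcases (hmx.trans hx).eq_or_lt with rfl | hm1
  · obtain rfl : x = 1 := le_antisymm hx hmx
    norm_num
  have hpoly : (1 - x) * (2 * x - 1) * (1 - m) ≤ x ^ 2 * (x - m) * (1 - m) + m * (1 - x) ^ 2 := by
    nlinarith [sq_nonneg ((x - m) * x - (1 - x) ^ 2 / 2),
      mul_nonneg (pow_nonneg (sub_nonneg.2 hx) 3) (by linarith : (0:ℝ) ≤ 3 + x)]
  refine le_of_mul_le_mul_right ?_ (sub_pos.2 hm1)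
  linarith [mul_le_mul_of_nonneg_left hw (sub_nonneg.2 hx)]

lemma step_ineq_of_mul_le (hu : 0 ≤ u) (huv : u ≤ v) (hx0 : 0 ≤ x) (hx1 : x ≤ 1) (hd : 0 ≤ d)
    (hK : (1 - x) * (2 * x - 1) ≤ (1 - x) * w + x ^ 2 * d) (h : u * x ≤ v * (1 - x)) :
    u * (2 * x - 1) ≤ u * w + v * x * d := by
  rcases hx1.eq_or_lt with rfl | hx1
  · obtain rfl : u = 0 := by linarith
    linarith [mul_nonneg (hu.trans huv) hd]
  refine le_of_mul_le_mul_right ?_ (sub_pos.2 hx1)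
  linarith [mul_le_mul_of_nonneg_left hK hu, mul_le_mul_of_nonneg_right h (mul_nonneg hx0 hd)]

lemma step_ineq_of_le_mul (hu : 0 ≤ u) (huv : u ≤ v) (hx1 : x ≤ 1) (hd : 0 ≤ d)
    (hw : 0 ≤ w) (hK : (1 - x) * (2 * x - 1) ≤ (1 - x) * w + x ^ 2 * d)
    (h : v * (1 - x) ≤ u * x) :
    (v - u) * (1 - x) ≤ u * w + (v - u * x) * d := by
  rcases le_or_gt (1 - x) d with hxd | hxd
  · linarith [mul_le_mul_of_nonneg_left hxd (sub_nonneg.2 huv), mul_nonneg hu hw,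
      mul_nonneg (mul_nonneg hu (sub_nonneg.2 hx1)) hd]
  refine le_of_mul_le_mul_right ?_ (by linarith : (0:ℝ) < 1 - x)
  -- both summands on the right are nonnegative, by `h` and by `hK`
  have hid : (u * w + (v - u * x) * d - (v - u) * (1 - x)) * (1 - x) =
      (u * x - v * (1 - x)) * ((1 - x) - d) +
        u * ((1 - x) * w + x ^ 2 * d - (1 - x) * (2 * x - 1)) := by ring
  linarith [mul_nonneg (sub_nonneg.2 h) (sub_nonneg.2 hxd.le),
    mul_nonneg hu (sub_nonneg.2 hK)]

lemma step_ineq (hu : 0 ≤ u) (huv : u ≤ v) (hx0 : 0 ≤ x) (hx1 : x ≤ 1) (hd : 0 ≤ d)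
    (hw : 0 ≤ w) (hK : (1 - x) * (2 * x - 1) ≤ (1 - x) * w + x ^ 2 * d) :
    u * x + min (u * x) (v * (1 - x)) + max (u * x) (v * (1 - x)) * d ≤ u + u * w + v * d := by
  rcases le_total (u * x) (v * (1 - x)) with h | h
  · rw [min_eq_left h, max_eq_right h]
    linarith [step_ineq_of_mul_le hu huv hx0 hx1 hd hK h]
  · rw [min_eq_right h, max_eq_left h]
    linarith [step_ineq_of_le_mul hu huv hx1 hd hw hK h]

end Scalar

/-- With `u` and `v` the probabilities that all coins flipped so far showed heads, resp. tails,
the summands of `listCost u v l` are the probabilities that this persists through each further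
coin of `l`. -/
noncomputable def listCost (u v : ℝ) (l : List ℝ) : ℝ :=
  u * prefixProdSum l + v * prefixProdSum (l.map (1 - ·))

/-- Here `d` stands for an upper bound on the spread `max l - min l`. -/
noncomputable def greedyBound (u v : ℝ) (l : List ℝ) (d : ℝ) : ℝ :=
  u * prefixProdSum (l.insertionSort (· ≤ ·)) +
    v * prefixProdSum ((l.map (1 - ·)).insertionSort (· ≤ ·)) + min u v + max u v * d

/-- Weights as in `listCost`. Unlike `IsGreedy`, a tie `u = v` may be broken either way, which
makes the notion symmetric under exchanging heads and tails. -/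
def IsGreedyList : ℝ → ℝ → List ℝ → Prop
  | _, _, [] => True
  | u, v, x :: l => ((u ≤ v ∧ ∀ y ∈ l, y ≤ x) ∨ (v ≤ u ∧ ∀ y ∈ l, x ≤ y)) ∧
      IsGreedyList (u * x) (v * (1 - x)) l

section GreedyBound

variable {u v x m d d' : ℝ} {l : List ℝ}

lemma listCost_cons (u v x : ℝ) (l : List ℝ) :
    listCost u v (x :: l) = u * x + v * (1 - x) + listCost (u * x) (v * (1 - x)) l := by
  simp only [listCost, prefixProdSum, List.map_cons]
  ring

lemma map_one_sub_map_one_sub (l : List ℝ) : (l.map (1 - ·)).map (1 - ·) = l := by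
  simp

lemma listCost_map_one_sub (u v : ℝ) (l : List ℝ) :
    listCost v u (l.map (1 - ·)) = listCost u v l := by
  rw [listCost, listCost, map_one_sub_map_one_sub]
  ring

lemma greedyBound_map_one_sub (u v : ℝ) (l : List ℝ) (d : ℝ) :
    greedyBound v u (l.map (1 - ·)) d = greedyBound u v l d := by
  rw [greedyBound, greedyBound, map_one_sub_map_one_sub, min_comm, max_comm, add_comm (v * _)]

lemma greedyBound_mono (hu : 0 ≤ u) (hd : d ≤ d') : greedyBound u v l d ≤ greedyBound u v l d' := by
  unfold greedyBound
  gcongr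

lemma greedyBound_perm {l' : List ℝ} (h : l.Perm l') (u v d : ℝ) :
    greedyBound u v l d = greedyBound u v l' d := by
  have hsort {s s' : List ℝ} (h : s.Perm s') :
      s.insertionSort (· ≤ ·) = s'.insertionSort (· ≤ ·) :=
    List.Perm.eq_of_pairwise' (List.pairwise_insertionSort _ _) (List.pairwise_insertionSort _ _)
      (((List.perm_insertionSort _ _).trans h).trans (List.perm_insertionSort _ _).symm)
  rw [greedyBound, greedyBound, hsort h, hsort (h.map _)]

/-- `T s := x s.prod + (1 - x) prefixProdSum s` satisfies `T [] = x` and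
`T (y :: s) = y (1 - x + T s)`; the bound is the fixed point of `c ↦ m (1 - x + c)`. -/
lemma mul_one_sub_le_prod_add_prefixProdSum (hm : 0 ≤ m) (hmx : m ≤ x) (hx : x ≤ 1)
    {s : List ℝ} (hs : ∀ y ∈ s, m ≤ y) :
    m * (1 - x) ≤ (1 - m) * (x * s.prod + (1 - x) * prefixProdSum s) := by
  induction s with
  | nil => simp only [prefixProdSum, List.prod_nil]; linarith
  | cons y s ih =>
    simp only [List.forall_mem_cons] at hs
    have hs0 : ∀ z ∈ s, 0 ≤ z := fun z hz => hm.trans (hs.2 z hz)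
    have hT := mul_prod_add_mul_prefixProdSum_nonneg (hm.trans hmx) hx hs0
    have h1m : 0 ≤ 1 - m := by linarith
    have hstep := mul_le_mul_of_nonneg_left (ih hs.2) hm
    have hy := mul_le_mul_of_nonneg_right hs.1
      (mul_nonneg h1m (add_nonneg (sub_nonneg.2 hx) hT))
    simp only [prefixProdSum, List.prod_cons]
    linarith

lemma listCost_cons_le_greedyBound (hu : 0 ≤ u) (huv : u ≤ v) (hm : 0 ≤ m) (hmx : m ≤ x)
    (hx : x ≤ 1) (hl : ∀ y ∈ l, m ≤ y ∧ y ≤ x)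
    (ih : listCost (u * x) (v * (1 - x)) l ≤ greedyBound (u * x) (v * (1 - x)) l (x - m)) :
    listCost u v (x :: l) ≤ greedyBound u v (x :: l) (x - m) := by
  set s := l.insertionSort (· ≤ ·)
  have hs : ∀ y ∈ s, m ≤ y := fun y hy => (hl y ((List.mem_insertionSort _).1 hy)).1
  have hsort : (x :: l).insertionSort (· ≤ ·) = s ++ [x] :=
    insertionSort_cons_of_forall_le fun y hy => (hl y hy).2
  have hsort' : ((x :: l).map (1 - ·)).insertionSort (· ≤ ·) =
      (1 - x) :: (l.map (1 - ·)).insertionSort (· ≤ ·) :=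
    List.insertionSort_cons_of_forall_rel _ fun b hb => by
      obtain ⟨y, hy, rfl⟩ := List.mem_map.1 hb
      linarith [(hl y hy).2]
  have hw0 := mul_prod_add_mul_prefixProdSum_nonneg (hm.trans hmx) hx
    fun y hy => hm.trans (hs y hy)
  have hK := one_sub_mul_two_mul_sub_one_le hm hmx hx
    (mul_one_sub_le_prod_add_prefixProdSum hm hmx hx hs)
  have hcore := step_ineq hu huv (hm.trans hmx) hx (sub_nonneg.2 hmx) hw0 hK
  rw [listCost_cons, greedyBound, hsort, hsort', prefixProdSum_append_singleton, min_eq_left huv,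
    max_eq_right huv]
  rw [greedyBound] at ih
  simp only [prefixProdSum] at ih ⊢
  linarith

end GreedyBound

theorem listCost_le_greedyBound (l : List ℝ) {u v m M : ℝ} (hu : 0 ≤ u) (hv : 0 ≤ v)
    (hm : 0 ≤ m) (hmM : m ≤ M) (hM : M ≤ 1) (hl : ∀ y ∈ l, m ≤ y ∧ y ≤ M)
    (hg : IsGreedyList u v l) : listCost u v l ≤ greedyBound u v l (M - m) := by
  induction l generalizing u v m M with
  | nil =>
    simp only [listCost, greedyBound, prefixProdSum, List.insertionSort_nil, List.map_nil]
    linarith [le_min hu hv, mul_nonneg (hu.trans (le_max_left u v)) (sub_nonneg.2 hmM)]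
  | cons x l ih =>
    simp only [List.forall_mem_cons] at hl
    obtain ⟨hpick, hg⟩ := hg
    have hux : 0 ≤ u * x := mul_nonneg hu (hm.trans hl.1.1)
    have hvx : 0 ≤ v * (1 - x) := mul_nonneg hv (by linarith [hl.1.2])
    rcases hpick with ⟨huv, hmax⟩ | ⟨hvu, hmin⟩
    · have hstep := listCost_cons_le_greedyBound hu huv hm hl.1.1 (hl.1.2.trans hM)
        (fun y hy => ⟨(hl.2 y hy).1, hmax y hy⟩)
        (ih hux hvx hm hl.1.1 (hl.1.2.trans hM) (fun y hy => ⟨(hl.2 y hy).1, hmax y hy⟩) hg)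
      exact hstep.trans (greedyBound_mono hu (by linarith [hl.1.2]))
    · -- the lightest coin is taken: exchange heads and tails
      have ih' := ih hux hvx (hm.trans hl.1.1) hl.1.2 hM (fun y hy => ⟨hmin y hy, (hl.2 y hy).2⟩)
        hg
      rw [← listCost_map_one_sub, ← greedyBound_map_one_sub,
        show M - x = (1 - x) - (1 - M) by ring, show u * x = u * (1 - (1 - x)) by ring] at ih'
      have hstep := listCost_cons_le_greedyBound hv hvu (sub_nonneg.2 hM) (by linarith [hl.1.2])
        (by linarith [hl.1.1]) (fun y hy => ?_) ih'
      · rw [← List.map_cons, listCost_map_one_sub, greedyBound_map_one_sub,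
          show (1 - x) - (1 - M) = M - x by ring] at hstep
        exact hstep.trans (greedyBound_mono hu (by linarith [hl.1.1]))
      · obtain ⟨z, hz, rfl⟩ := List.mem_map.1 hy
        constructor <;> linarith [hmin z hz, (hl.2 z hz).2]

theorem greedyBound_le_listCost_add_one {l : List ℝ} (hl : ∀ y ∈ l, 0 ≤ y ∧ y ≤ 1) {m M : ℝ}
    (hm : m ∈ l) (hM : M ∈ l) : greedyBound 1 1 l (M - m) ≤ listCost 1 1 l + 1 := by
  obtain ⟨x, l, rfl⟩ := List.exists_cons_of_ne_nil (List.ne_nil_of_mem hm)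
  simp only [List.forall_mem_cons] at hl
  have hl0 : ∀ y ∈ l, 0 ≤ y := fun y hy => (hl.2 y hy).1
  have hl1 : ∀ y ∈ l.map (1 - ·), 0 ≤ y := fun y hy => by
    obtain ⟨z, hz, rfl⟩ := List.mem_map.1 hy
    linarith [(hl.2 z hz).2]
  have hsort0 : ∀ y ∈ l.insertionSort (· ≤ ·), 0 ≤ y :=
    fun y hy => hl0 y ((List.mem_insertionSort _).1 hy)
  have hsort1 : ∀ y ∈ (l.map (1 - ·)).insertionSort (· ≤ ·), 0 ≤ y :=
    fun y hy => hl1 y ((List.mem_insertionSort _).1 hy)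
  have hA := prefixProdSum_orderedInsert_le_headI_add (x := x) hsort0
  have hB := prefixProdSum_orderedInsert_le_headI_add (x := 1 - x) hsort1
  have hmin : ((x :: l).insertionSort (· ≤ ·)).headI ≤ m := headI_insertionSort_le hm
  have hmax : (((x :: l).map (1 - ·)).insertionSort (· ≤ ·)).headI ≤ 1 - M :=
    headI_insertionSort_le (List.mem_map_of_mem hM)
  have hA' := mul_le_mul_of_nonneg_left (prefixProdSum_insertionSort_le hl0) hl.1.1
  have hB' := mul_le_mul_of_nonneg_left (prefixProdSum_insertionSort_le hl1)
    (sub_nonneg.2 hl.1.2)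
  rw [List.map_cons, List.insertionSort_cons] at hmax
  rw [List.insertionSort_cons] at hmin
  simp only [greedyBound, listCost, List.map_cons, List.insertionSort_cons, prefixProdSum]
  simp only [min_self, max_self, one_mul]
  linarith

theorem listCost_le_listCost_add_one_of_perm {l l' : List ℝ} (h : l.Perm l')
    (hl : ∀ y ∈ l, 0 ≤ y ∧ y ≤ 1) (hg : IsGreedyList 1 1 l) :
    listCost 1 1 l ≤ listCost 1 1 l' + 1 := by
  by_cases hne : l = []
  · subst hne
    rw [← h.nil_eq]
    simp [listCost, prefixProdSum]
  have hne' : l.toFinset.Nonempty := List.toFinset_nonempty_iff _ |>.2 hne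
  obtain ⟨m, hm, hmin⟩ := l.toFinset.exists_min_image id hne'
  obtain ⟨M, hM, hmax⟩ := l.toFinset.exists_max_image id hne'
  simp only [List.mem_toFinset, id] at hm hM hmin hmax
  calc listCost 1 1 l ≤ greedyBound 1 1 l (M - m) :=
        listCost_le_greedyBound l zero_le_one zero_le_one (hl m hm).1 (hmin M hM) (hl M hM).2
          (fun y hy => ⟨hmin y hy, hmax y hy⟩) hg
    _ = greedyBound 1 1 l' (M - m) := greedyBound_perm h _ _ _
    _ ≤ listCost 1 1 l' + 1 := greedyBound_le_listCost_add_one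
          (fun y hy => hl y (h.mem_iff.2 hy)) (h.mem_iff.1 hm) (h.mem_iff.1 hM)

def coinList (n : ℕ) (p : ℕ → ℝ) (a : ℕ → ℕ) : List ℝ :=
  (List.range' 1 n).map fun i => p (a i)

section Orderings

variable {n : ℕ} {p : ℕ → ℝ} {a b : ℕ → ℕ}

@[simp] lemma z1_one : z1 p a 1 = 1 := by simp [z1]

@[simp] lemma z0_one : z0 p a 1 = 1 := by simp [z0]

lemma z1_succ {k : ℕ} (hk : 1 ≤ k) : z1 p a (k + 1) = z1 p a k * p (a k) :=
  Finset.prod_Ico_succ_top hk _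

lemma z0_succ {k : ℕ} (hk : 1 ≤ k) : z0 p a (k + 1) = z0 p a k * (1 - p (a k)) :=
  Finset.prod_Ico_succ_top hk _

lemma listCost_map_range' (p : ℕ → ℝ) (a : ℕ → ℕ) (m : ℕ) {k : ℕ} (hk : 1 ≤ k) :
    listCost (z1 p a k) (z0 p a k) ((List.range' k m).map fun i => p (a i)) =
      ∑ j ∈ Ico (k + 1) (k + m + 1), (z1 p a j + z0 p a j) := by
  induction m generalizing k with
  | zero => simp [listCost, prefixProdSum]
  | succ m ih =>
    rw [List.range'_succ, List.map_cons, listCost_cons, ← z1_succ hk, ← z0_succ hk,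
      ih (by omega), Finset.sum_eq_sum_Ico_succ_bot (by omega : k + 1 < k + (m + 1) + 1),
      show k + 1 + m + 1 = k + (m + 1) + 1 by omega]

lemma cost_eq_listCost (hn : 2 ≤ n) (p : ℕ → ℝ) (a : ℕ → ℕ) :
    cost n p a = listCost 1 1 (coinList n p a) + 1 - (z1 p a (n + 1) + z0 p a (n + 1)) := by
  have h1 := listCost_map_range' p a n le_rfl
  rw [z1_one, z0_one, show 1 + n + 1 = n + 2 by omega] at h1
  have h2 : z1 p a 2 + z0 p a 2 = 1 := by simp [z1, z0]
  rw [coinList, h1, Finset.sum_eq_sum_Ico_succ_bot (by omega),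
    Finset.sum_Ico_succ_top (by omega), h2, cost, ← Finset.Ico_add_one_right_eq_Icc]
  ring

lemma IsOrdering.prod_comp (ha : IsOrdering n a) (f : ℕ → ℝ) :
    ∏ i ∈ Ico 1 (n + 1), f (a i) = ∏ i ∈ Ico 1 (n + 1), f i := by
  rw [Finset.Ico_add_one_right_eq_Icc]
  exact Finset.prod_nbij a (fun i hi => by simpa using ha.mapsTo (by simpa using hi))
    (by simpa using ha.injOn) (by simpa using ha.surjOn) fun _ _ => rfl

lemma IsOrdering.coinList_perm (p : ℕ → ℝ) (ha : IsOrdering n a) :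
    (coinList n p a).Perm ((List.range' 1 n).map p) := by
  have hmem (i : ℕ) : i ∈ List.range' 1 n ↔ i ∈ Set.Icc 1 n := by
    rw [List.mem_range'_1, Set.mem_Icc]; omega
  have hperm : ((List.range' 1 n).map a).Perm (List.range' 1 n) := by
    refine (List.perm_ext_iff_of_nodup ?_ List.nodup_range').2 fun i => ?_
    · exact List.Nodup.map_on (fun i hi j hj => ha.injOn ((hmem i).1 hi) ((hmem j).1 hj))
        List.nodup_range'
    · simp only [List.mem_map, hmem]
      exact ⟨fun ⟨j, hj, hji⟩ => hji ▸ ha.mapsTo hj, fun hi => ha.surjOn hi⟩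
  have := hperm.map p
  rwa [List.map_map] at this

lemma IsGreedy.isGreedyList_map_range' (hb : IsGreedy n p b) (m : ℕ) {k : ℕ} (hk : 1 ≤ k)
    (hkm : k + m = n + 1) :
    IsGreedyList (z1 p b k) (z0 p b k) ((List.range' k m).map fun i => p (b i)) := by
  induction m generalizing k with
  | zero => trivial
  | succ m ih =>
    rw [List.range'_succ, List.map_cons]
    refine ⟨?_, ?_⟩
    · simp only [List.forall_mem_map, List.mem_range'_1]
      by_cases hbias : OneBiased p b k
      · exact Or.inr ⟨hbias.le, fun j hj => (hb.2 k hk (by omega)).1 hbias j (by omega) (by omega)⟩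
      · exact Or.inl ⟨not_lt.1 hbias,
          fun j hj => (hb.2 k hk (by omega)).2 hbias j (by omega) (by omega)⟩
    · rw [← z1_succ hk, ← z0_succ hk]
      exact ih (by omega) (by omega)

lemma IsGreedy.isGreedyList_coinList (hb : IsGreedy n p b) :
    IsGreedyList 1 1 (coinList n p b) := by
  simpa [coinList] using hb.isGreedyList_map_range' n le_rfl (add_comm 1 n)

end Orderings

/-- A greedy ordering costs at most 1 more than any ordering; in particular its
cost exceeds the minimum cost over all orderings by at most 1. -/
theorem greedy_cost_le_optimal_add_one (n : ℕ) (hn : 2 ≤ n) (p : ℕ → ℝ)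
    (hp : ∀ i, 1 ≤ i → i ≤ n → 0 ≤ p i ∧ p i ≤ 1)
    (b : ℕ → ℕ) (hb : IsGreedy n p b)
    (a : ℕ → ℕ) (ha : IsOrdering n a) :
    cost n p b ≤ cost n p a + 1 := by
  have hentries : ∀ y ∈ coinList n p b, 0 ≤ y ∧ y ≤ 1 := fun y hy => by
    obtain ⟨i, hi, rfl⟩ := List.mem_map.1 ((hb.1.coinList_perm p).mem_iff.1 hy)
    rw [List.mem_range'_1] at hi
    exact hp i hi.1 (by omega)
  have hlist := listCost_le_listCost_add_one_of_perm
    ((hb.1.coinList_perm p).trans (ha.coinList_perm p).symm) hentries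
    hb.isGreedyList_coinList
  have hz1 : z1 p b (n + 1) = z1 p a (n + 1) := by
    simp only [z1, hb.1.prod_comp, ha.prod_comp]
  have hz0 : z0 p b (n + 1) = z0 p a (n + 1) := by
    simp only [z0, hb.1.prod_comp (1 - p ·), ha.prod_comp (1 - p ·)]
  rw [cost_eq_listCost hn, cost_eq_listCost hn, hz1, hz0]
  linarith
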